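/- arXiv:1406.2124 — 3 statements merged into one kernel-verified Lean document; each statement's English description precedes it below -/
import Mathlib

section
/- For every r ∈ ℕ with r ≥ 1, every n ∈ ℕ, and every x ∈ ℚ, the Daehee polynomial of order r satisfies D_n^{(r)}(x) = Σ_{m=0}^{n} S_1(n,m) · B_m^{(r)}(x), where S_1(n,m) are the signed Stirling numbers of the first kind and B_m^{(r)}(x) are the Bernoulli polynomials of order r. -/
/-- `log(1+t) = ∑_{n ≥ 1} (-1)^{n+1} t^n / n` as a formal power series over `ℚ`. -/
noncomputable def logOneAdd : PowerSeries ℚ :=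
  PowerSeries.mk fun n => if n = 0 then 0 else (-1 : ℚ) ^ (n + 1) / n

/-- `e^{xt} = ∑_{n ≥ 0} x^n t^n / n!` as a formal power series over `ℚ`. -/
noncomputable def expMul (x : ℚ) : PowerSeries ℚ :=
  PowerSeries.mk fun n => x ^ n / (n.factorial : ℚ)

/-- Formal composition `f(g(t))` of power series, intended for `g` with zero
constant term (then `coeff n (g^m) = 0` for `m > n`, so the sum below is the
full composition). -/
noncomputable def psComp (f g : PowerSeries ℚ) : PowerSeries ℚ :=
  PowerSeries.mk fun n =>
    ∑ m ∈ Finset.range (n + 1),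
      PowerSeries.coeff m f * PowerSeries.coeff n (g ^ m)

/-- `(1+t)^x := exp (x · log(1+t))` as a formal power series over `ℚ`. -/
noncomputable def onePlusPow (x : ℚ) : PowerSeries ℚ :=
  psComp (PowerSeries.exp ℚ) (x • logOneAdd)

/-- The falling factorial `(x)_n = x (x-1) ⋯ (x-n+1)`. -/
def fallFact (x : ℚ) (n : ℕ) : ℚ := ∏ i ∈ Finset.range n, (x - (i : ℚ))

/-! Substituting `log(1+t)` into the defining identity of the Bernoulli polynomials turns
`e^t - 1` into `t` (because `exp (log (1+t)) = 1 + t`) and `e^{xt}` into `(1+t)^x`. Comparing with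
the Daehee identity and cancelling `t^r` gives `∑ D_n t^n/n! = ∑ B_m (log(1+t))^m/m!`, and the
coefficient of `t^n` on the right is `∑ S_1(n,m) B_m / n!`. -/

open PowerSeries Finset

namespace PowerSeries

theorem coeff_subst_eq_sum_range {R : Type*} [CommRing R] {f g : R⟦X⟧}
    (hg : constantCoeff g = 0) (n : ℕ) :
    coeff n (f.subst g) = ∑ m ∈ range (n + 1), coeff m f * coeff n (g ^ m) := by
  rw [coeff_subst' (HasSubst.of_constantCoeff_zero' hg)]
  refine finsum_eq_sum_of_support_subset _ fun m hm => ?_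
  by_contra hmn
  have hX : X ^ m ∣ g ^ m := pow_dvd_pow_of_dvd (X_dvd_iff.mpr hg) m
  exact hm (by simp only [X_pow_dvd_iff.mp hX n (by simpa using hmn), smul_zero])

theorem rescale_subst_eq_subst_smul {R : Type*} [CommRing R] {g : R⟦X⟧} (hg : HasSubst g)
    (a : R) (f : R⟦X⟧) : (rescale a f).subst g = f.subst (a • g) := by
  rw [rescale_eq_subst, subst_comp_subst_apply (HasSubst.smul_X' a) hg, subst_smul hg, subst_X hg]

section ExpLog

variable {A : Type*} [CommRing A] [Algebra ℚ A]

theorem one_add_X_mul_derivative_log : (1 + X) * d⁄dX A (log A) = 1 := by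
  ext n
  rw [deriv_log, add_mul, one_mul, map_add]
  cases n with
  | zero => simp
  | succ k => simp [coeff_succ_X_mul, pow_succ]

theorem derivative_derivative_log : d⁄dX A (d⁄dX A (log A)) = -d⁄dX A (log A) ^ 2 := by
  have h := congrArg (d⁄dX A) (one_add_X_mul_derivative_log (A := A))
  rw [Derivation.leibniz, derivative_one, map_add, derivative_one, derivative_X, zero_add,
    smul_eq_mul, smul_eq_mul, mul_one] at h
  linear_combination d⁄dX A (log A) * h -
    d⁄dX A (d⁄dX A (log A)) * one_add_X_mul_derivative_log (A := A)

theorem exp_subst_log : (exp A).subst (log A) = (1 + X : A⟦X⟧) := by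
  have := IsAddTorsionFree.of_module_rat (M := A)
  set u := d⁄dX A (log A)
  set E : A⟦X⟧ := (exp A).subst (log A)
  -- `E' = E u` and `u' = -u²` make `E u` constant.
  have hEu : E * u = 1 := by
    refine derivative.ext ?_ ?_
    · rw [Derivation.leibniz, derivative_subst HasSubst.log, derivative_exp,
        derivative_derivative_log, derivative_one, smul_eq_mul, smul_eq_mul]
      ring
    · rw [map_mul, ← coeff_zero_eq_constantCoeff_apply, coeff_subst_eq_sum_range constantCoeff_log]
      simp [u, deriv_log]
  calc E = E * u * (1 + X) := by rw [mul_assoc, mul_comm u, one_add_X_mul_derivative_log, mul_one]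
    _ = 1 + X := by rw [hEu, one_mul]

theorem exp_sub_one_subst_log : (exp A - 1).subst (log A) = (X : A⟦X⟧) := by
  rw [← coe_substAlgHom HasSubst.log, map_sub, map_one, coe_substAlgHom, exp_subst_log,
    add_sub_cancel_left]

end ExpLog

end PowerSeries

theorem logOneAdd_eq_log : logOneAdd = log ℚ := by
  ext n
  simp [logOneAdd]

theorem psComp_eq_subst {f g : ℚ⟦X⟧} (hg : constantCoeff g = 0) : psComp f g = f.subst g := by
  ext n
  rw [psComp, coeff_mk, coeff_subst_eq_sum_range hg]

theorem expMul_eq_rescale_exp (x : ℚ) : expMul x = rescale x (exp ℚ) := by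
  ext n
  simp [expMul, coeff_rescale, div_eq_mul_inv]

theorem onePlusPow_eq_subst_log (x : ℚ) : onePlusPow x = (expMul x).subst (log ℚ) := by
  rw [onePlusPow, psComp_eq_subst (by simp [logOneAdd_eq_log]), expMul_eq_rescale_exp,
    rescale_subst_eq_subst_smul HasSubst.log, logOneAdd_eq_log]

theorem daehee_eq_stirling_sum_bernoulli_general
    (r : ℕ) (x : ℚ) (D B : ℕ → ℚ) (S1 : ℕ → ℕ → ℚ)
    (hD : logOneAdd ^ r * onePlusPow x =
      PowerSeries.X ^ r * (PowerSeries.mk fun k => D k / (k.factorial : ℚ)))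
    (hB : (PowerSeries.X : PowerSeries ℚ) ^ r * expMul x =
      (PowerSeries.exp ℚ - 1) ^ r * (PowerSeries.mk fun k => B k / (k.factorial : ℚ)))
    (hS1 : ∀ m, logOneAdd ^ m =
      (m.factorial : ℚ) • (PowerSeries.mk fun k => S1 k m / (k.factorial : ℚ))) :
    ∀ n, D n = ∑ m ∈ Finset.range (n + 1), S1 n m * B m := by
  set Bs : ℚ⟦X⟧ := mk fun k => B k / k.factorial
  rw [logOneAdd_eq_log] at hD hS1
  have hB_log : log ℚ ^ r * onePlusPow x = X ^ r * Bs.subst (log ℚ) := by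
    have h := congrArg (subst (log ℚ)) hB
    rwa [subst_mul HasSubst.log, subst_mul HasSubst.log, subst_pow HasSubst.log,
      subst_pow HasSubst.log, subst_X HasSubst.log, exp_sub_one_subst_log,
      ← onePlusPow_eq_subst_log] at h
  have hDB : (mk fun k => D k / (k.factorial : ℚ)) = Bs.subst (log ℚ) :=
    mul_left_cancel₀ (pow_ne_zero r X_ne_zero) (hD.symm.trans hB_log)
  intro n
  have hn := congrArg (coeff n) hDB
  rw [coeff_mk, coeff_subst_eq_sum_range constantCoeff_log] at hn
  have hfac : ∀ m : ℕ, (m.factorial : ℚ) ≠ 0 := fun m => Nat.cast_ne_zero.mpr m.factorial_ne_zero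
  have hterm : ∀ m, coeff m Bs * coeff n (log ℚ ^ m) = S1 n m * B m / n.factorial := by
    intro m
    rw [hS1, map_smul, coeff_mk, coeff_mk, smul_eq_mul]
    field_simp [hfac m]
  rwa [Finset.sum_congr rfl fun m _ => hterm m, ← Finset.sum_div,
    div_left_inj' (hfac n)] at hn

theorem daehee_eq_stirling_sum_bernoulli
    (r : ℕ) (hr : 1 ≤ r) (x : ℚ) (D B : ℕ → ℚ) (S1 : ℕ → ℕ → ℚ)
    (hD : logOneAdd ^ r * onePlusPow x =
      PowerSeries.X ^ r * (PowerSeries.mk fun k => D k / (k.factorial : ℚ)))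
    (hB : (PowerSeries.X : PowerSeries ℚ) ^ r * expMul x =
      (PowerSeries.exp ℚ - 1) ^ r * (PowerSeries.mk fun k => B k / (k.factorial : ℚ)))
    (hS1 : ∀ m, logOneAdd ^ m =
      (m.factorial : ℚ) • (PowerSeries.mk fun k => S1 k m / (k.factorial : ℚ))) :
    ∀ n, D n = ∑ m ∈ Finset.range (n + 1), S1 n m * B m :=
  daehee_eq_stirling_sum_bernoulli_general r x D B S1 hD hB hS1
end

section
/- For all r, s ∈ ℕ with r, s ≥ 1, every n ∈ ℕ, and every x ∈ ℚ, the Daehee–Changhee mixed-type polynomial of order (r,s) satisfies DC_n^{(r,s)}(x) = Σ_{m=0}^{n} C(n,m) · D_m^{(r)}(x) · Ch_{n−m}^{(s)}, where D_m^{(r)}(x) are the Daehee polynomials of order r and Ch_{n−m}^{(s)} = Ch_{n−m}^{(s)}(0) are the Changhee numbers of order s. -/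
open PowerSeries

/- Read as identities of power series with the denominators `t^r` and `(t+2)^s` cleared, the
hypotheses say that `t^r (t+2)^s` times the generating function of `DC` equals `t^r (t+2)^s` times
the product of the generating functions of `D` and `Ch`. Since `ℚ⟦X⟧` is a domain, the factor
cancels, and a product of exponential generating functions is the exponential generating function
of the binomial convolution. -/

theorem onePlusPow_zero : onePlusPow 0 = 1 := by
  ext k
  rw [onePlusPow, psComp, zero_smul, coeff_mk]
  cases k with
  | zero => simp [PowerSeries.exp]
  | succ k =>
    rw [coeff_one, if_neg k.succ_ne_zero]
    refine Finset.sum_eq_zero fun m _ => ?_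
    cases m with
    | zero => simp [coeff_one]
    | succ m => simp [zero_pow m.succ_ne_zero]

theorem mk_div_factorial_mul_mk_div_factorial {K : Type*} [Field K] [CharZero K]
    (a b : ℕ → K) :
    (mk fun k => a k / k.factorial) * (mk fun k => b k / k.factorial) =
      mk fun n => (∑ m ∈ Finset.range (n + 1), (n.choose m : K) * a m * b (n - m)) / n.factorial := by
  ext n
  rw [coeff_mul, Finset.Nat.sum_antidiagonal_eq_sum_range_succ
    (fun i j => coeff i (mk fun k => a k / k.factorial) * coeff j (mk fun k => b k / k.factorial)),
    coeff_mk, Finset.sum_div]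
  refine Finset.sum_congr rfl fun m hm => ?_
  have hmn : m ≤ n := Finset.mem_range_succ_iff.mp hm
  simp only [coeff_mk]
  have hn : (n.factorial : K) ≠ 0 := Nat.cast_ne_zero.mpr n.factorial_ne_zero
  rw [Nat.cast_choose K hmn]
  field_simp

theorem X_add_two_ne_zero {R : Type*} [CommRing R] [Nontrivial R] : (X + 2 : R⟦X⟧) ≠ 0 := by
  intro h
  have h₁ := congrArg (coeff 1) h
  rw [map_add, coeff_X, ← map_ofNat (C (R := R)), coeff_C] at h₁
  simp at h₁

theorem daehee_changhee_mixed_eq_sum_general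
    (r s : ℕ) (n : ℕ) (x : ℚ) (DC D Ch : ℕ → ℚ)
    (hDC : logOneAdd ^ r * (2 : PowerSeries ℚ) ^ s * onePlusPow x =
      PowerSeries.X ^ r * (PowerSeries.X + 2) ^ s * (PowerSeries.mk fun k => DC k / (k.factorial : ℚ)))
    (hD : logOneAdd ^ r * onePlusPow x =
      PowerSeries.X ^ r * (PowerSeries.mk fun k => D k / (k.factorial : ℚ)))
    (hCh : (2 : PowerSeries ℚ) ^ s * onePlusPow (0 : ℚ) =
      (PowerSeries.X + 2) ^ s * (PowerSeries.mk fun k => Ch k / (k.factorial : ℚ))) :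
    DC n = ∑ m ∈ Finset.range (n + 1), (n.choose m : ℚ) * D m * Ch (n - m) := by
  rw [onePlusPow_zero, mul_one] at hCh
  have hprod : X ^ r * (X + 2) ^ s * (mk fun k => DC k / (k.factorial : ℚ)) =
      X ^ r * (X + 2) ^ s *
        ((mk fun k => D k / (k.factorial : ℚ)) * (mk fun k => Ch k / (k.factorial : ℚ))) := by
    linear_combination -hDC + 2 ^ s * hD + X ^ r * (mk fun k => D k / (k.factorial : ℚ)) * hCh
  have hne : (X ^ r * (X + 2) ^ s : PowerSeries ℚ) ≠ 0 :=
    mul_ne_zero (pow_ne_zero r X_ne_zero) (pow_ne_zero s X_add_two_ne_zero)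
  have hcoeff := congrArg (coeff n)
    ((mul_left_cancel₀ hne hprod).trans (mk_div_factorial_mul_mk_div_factorial D Ch))
  simp only [coeff_mk] at hcoeff
  exact (div_left_inj' (by positivity)).mp hcoeff

theorem daehee_changhee_mixed_eq_sum
    (r s : ℕ) (hr : 1 ≤ r) (hs : 1 ≤ s) (n : ℕ) (x : ℚ) (DC D Ch : ℕ → ℚ)
    (hDC : logOneAdd ^ r * (2 : PowerSeries ℚ) ^ s * onePlusPow x =
      PowerSeries.X ^ r * (PowerSeries.X + 2) ^ s * (PowerSeries.mk fun k => DC k / (k.factorial : ℚ)))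
    (hD : logOneAdd ^ r * onePlusPow x =
      PowerSeries.X ^ r * (PowerSeries.mk fun k => D k / (k.factorial : ℚ)))
    (hCh : (2 : PowerSeries ℚ) ^ s * onePlusPow (0 : ℚ) =
      (PowerSeries.X + 2) ^ s * (PowerSeries.mk fun k => Ch k / (k.factorial : ℚ))) :
    DC n = ∑ m ∈ Finset.range (n + 1), (n.choose m : ℚ) * D m * Ch (n - m) :=
  daehee_changhee_mixed_eq_sum_general r s n x DC D Ch hDC hD hCh
end

section
/- For all r, s ∈ ℕ with r, s ≥ 1, every n ∈ ℕ, and every x ∈ ℚ, where DC_n^{(r,s)}(x) are defined by (log(1+t)/t)^r (2/(t+2))^s (1+t)^x = Σ_n DC_n^{(r,s)}(x) t^n/n!, one has DC_n^{(r,s)}(x) = Σ_{m=0}^{n} BE_m^{(r,s)}(x) · S_1(n,m), where BE_m^{(r,s)}(x) are the Bernoulli–Euler mixed-type polynomials of order (r,s) and S_1(n,m) are the signed Stirling numbers of the first kind. -/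
open PowerSeries Finset

lemma coeff_pow_eq_zero {g : PowerSeries ℚ} (hg : constantCoeff g = 0)
    {n m : ℕ} (h : n < m) : coeff n (g ^ m) = 0 := by
  have : (X : ℚ⟦X⟧) ^ m ∣ g ^ m := pow_dvd_pow_of_dvd (X_dvd_iff.mpr hg) m
  exact (X_pow_dvd_iff.mp this) n h

lemma coeff_psComp (f g : PowerSeries ℚ) (n : ℕ) :
    coeff n (psComp f g) =
      ∑ m ∈ range (n + 1), coeff m f * coeff n (g ^ m) := by
  simp [psComp]

/-- truncated evaluation -/
noncomputable def Phi (N : ℕ) (f g : PowerSeries ℚ) : PowerSeries ℚ :=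
  ∑ m ∈ range (N + 1), PowerSeries.C (coeff m f) * g ^ m

lemma coeff_psComp_eq_Phi {g : PowerSeries ℚ} (hg : constantCoeff g = 0)
    (f : PowerSeries ℚ) {n N : ℕ} (h : n ≤ N) :
    coeff n (psComp f g) = coeff n (Phi N f g) := by
  rw [coeff_psComp, Phi, map_sum]
  simp only [coeff_C_mul]
  refine Finset.sum_subset (by simp; omega) ?_
  intro m hm hm'
  rw [coeff_pow_eq_zero hg (by simp at hm hm' ⊢; omega), mul_zero]

lemma triangle_sum (n : ℕ) (F : ℕ × ℕ → ℚ) (hF : ∀ p : ℕ × ℕ, n < p.1 + p.2 → F p = 0) :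
    ∑ m ∈ range (n + 1), ∑ p ∈ Finset.HasAntidiagonal.antidiagonal m, F p =
      ∑ i ∈ range (n + 1), ∑ j ∈ range (n + 1), F (i, j) := by
  rw [← Finset.sum_product']
  have hR : ∑ p ∈ range (n + 1) ×ˢ range (n + 1), F p =
      ∑ p ∈ (range (n + 1) ×ˢ range (n + 1)).filter (fun p => p.1 + p.2 ≤ n), F p := by
    refine (Finset.sum_subset (Finset.filter_subset _ _) ?_).symm
    intro p _ hp
    simp only [Finset.mem_filter, not_and, not_le] at hp
    exact hF p (by by_cases h : p ∈ range (n+1) ×ˢ range (n+1) <;> [exact hp h; simp_all])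
  rw [hR, Finset.sum_sigma']
  refine Finset.sum_nbij' (fun q => q.2) (fun p => ⟨p.1 + p.2, p⟩) ?_ ?_ ?_ ?_ ?_
  · rintro ⟨m, p⟩ hq
    simp only [Finset.mem_sigma, Finset.mem_range, Finset.HasAntidiagonal.mem_antidiagonal] at hq
    simp only [Finset.mem_filter, Finset.mem_product, Finset.mem_range]
    omega
  · rintro ⟨i, j⟩ hp
    simp only [Finset.mem_filter, Finset.mem_product, Finset.mem_range] at hp
    exact Finset.mem_sigma.mpr ⟨Finset.mem_range.mpr (show i + j < n + 1 by omega),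
      Finset.HasAntidiagonal.mem_antidiagonal.mpr rfl⟩
  · rintro ⟨m, p⟩ hq
    simp only [Finset.mem_sigma, Finset.mem_range, Finset.HasAntidiagonal.mem_antidiagonal] at hq
    simp [hq.2]
  · rintro ⟨i, j⟩ _; rfl
  · rintro ⟨m, p⟩ _; rfl

lemma psComp_mul {g : PowerSeries ℚ} (hg : constantCoeff g = 0) (f₁ f₂ : PowerSeries ℚ) :
    psComp (f₁ * f₂) g = psComp f₁ g * psComp f₂ g := by
  ext n
  have h1 : coeff n (psComp f₁ g * psComp f₂ g) = coeff n (Phi n f₁ g * Phi n f₂ g) := by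
    rw [coeff_mul, coeff_mul]
    refine Finset.sum_congr rfl ?_
    rintro ⟨a, b⟩ hab
    rw [Finset.HasAntidiagonal.mem_antidiagonal] at hab
    rw [coeff_psComp_eq_Phi hg f₁ (show a ≤ n by omega),
      coeff_psComp_eq_Phi hg f₂ (show b ≤ n by omega)]
  have L : coeff n (Phi n (f₁ * f₂) g) = ∑ m ∈ Finset.range (n+1),
      ∑ p ∈ Finset.HasAntidiagonal.antidiagonal m,
        (coeff p.1 f₁ * coeff p.2 f₂) * coeff n (g ^ (p.1 + p.2)) := by
    rw [Phi, map_sum]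
    refine Finset.sum_congr rfl fun m _ => ?_
    rw [coeff_C_mul, coeff_mul, Finset.sum_mul]
    refine Finset.sum_congr rfl fun p hp => ?_
    rw [Finset.HasAntidiagonal.mem_antidiagonal] at hp
    rw [hp]
  have R : coeff n (Phi n f₁ g * Phi n f₂ g) = ∑ i ∈ Finset.range (n+1),
      ∑ j ∈ Finset.range (n+1),
        (coeff i f₁ * coeff j f₂) * coeff n (g ^ (i + j)) := by
    rw [Phi, Phi, Finset.sum_mul_sum, map_sum]
    refine Finset.sum_congr rfl fun i _ => ?_
    rw [map_sum]
    refine Finset.sum_congr rfl fun j _ => ?_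
    rw [mul_mul_mul_comm, ← map_mul, ← pow_add, coeff_C_mul]
  rw [h1, coeff_psComp_eq_Phi hg (f₁ * f₂) (le_refl n), L, R]
  refine triangle_sum n _ fun p hp => ?_
  rw [coeff_pow_eq_zero hg hp, mul_zero]

lemma psComp_add (f₁ f₂ g : PowerSeries ℚ) :
    psComp (f₁ + f₂) g = psComp f₁ g + psComp f₂ g := by
  ext n
  simp [coeff_psComp, add_mul, Finset.sum_add_distrib]

lemma psComp_one (g : PowerSeries ℚ) : psComp 1 g = 1 := by
  ext n
  rw [coeff_psComp]
  rw [Finset.sum_eq_single 0]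
  · simp
  · intro m hm hm0
    rw [coeff_one]
    simp [hm0]
  · simp

lemma psComp_zero (g : PowerSeries ℚ) : psComp 0 g = 0 := by
  ext n; simp [coeff_psComp]

lemma psComp_X {g : PowerSeries ℚ} (hg : constantCoeff g = 0) : psComp X g = g := by
  ext n
  rw [coeff_psComp]
  rw [Finset.sum_eq_single 1]
  · simp
  · intro m hm hm1
    rw [coeff_X]
    simp [hm1]
  · intro h
    simp only [Finset.mem_range, not_lt] at h
    have hn : n = 0 := by omega
    subst hn
    simp [pow_one, coeff_zero_eq_constantCoeff, hg]
lemma constantCoeff_log : constantCoeff logOneAdd = 0 := by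
  rw [← coeff_zero_eq_constantCoeff_apply]
  simp [logOneAdd]

lemma one_add_X_mul_dlog : ((1 + X) * d⁄dX ℚ logOneAdd : ℚ⟦X⟧) = 1 := by
  ext n
  rw [add_mul, one_mul, map_add]
  cases n with
  | zero =>
    rw [coeff_zero_X_mul, coeff_derivative]
    simp [logOneAdd]
  | succ n =>
    rw [coeff_succ_X_mul, coeff_derivative, coeff_derivative]
    simp only [logOneAdd, coeff_mk, Nat.succ_ne_zero, if_false, coeff_one, Nat.add_eq_zero,
      and_false]
    have h1 : ((n : ℚ) + 1) ≠ 0 := by positivity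
    have h2 : ((n : ℚ) + 1 + 1) ≠ 0 := by positivity
    field_simp
    push_cast
    ring

noncomputable def gN (N : ℕ) : ℚ⟦X⟧ :=
  ∑ m ∈ range (N + 1), ((m.factorial : ℚ))⁻¹ • logOneAdd ^ m

lemma gN_eq_Phi (N : ℕ) : gN N = Phi N (exp ℚ) logOneAdd := by
  unfold gN Phi
  refine Finset.sum_congr rfl fun m _ => ?_
  rw [coeff_exp, smul_eq_C_mul]
  norm_num

lemma coeff_expLog {n N : ℕ} (h : n ≤ N) :
    coeff n (psComp (exp ℚ) logOneAdd) = coeff n (gN N) := by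
  rw [gN_eq_Phi, coeff_psComp_eq_Phi _root_.constantCoeff_log _ h]

lemma deriv_gN (N : ℕ) : ((1 + X) * d⁄dX ℚ (gN (N + 1)) : ℚ⟦X⟧) = gN N := by
  unfold gN
  rw [map_sum]
  rw [Finset.mul_sum]
  rw [Finset.sum_range_succ']
  have h0 : ((1 + X) * d⁄dX ℚ (((Nat.factorial 0 : ℚ))⁻¹ • logOneAdd ^ 0) : ℚ⟦X⟧) = 0 := by
    simp
  rw [h0, add_zero]
  refine Finset.sum_congr rfl fun m _ => ?_
  rw [Derivation.map_smul, Derivation.leibniz_pow]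
  rw [Nat.add_sub_cancel, smul_eq_mul (α := ℚ⟦X⟧), mul_smul_comm, mul_smul_comm,
    mul_left_comm, one_add_X_mul_dlog, mul_one, ← Nat.cast_smul_eq_nsmul ℚ, smul_smul]
  congr 1
  rw [Nat.factorial_succ]
  have hm : ((m:ℚ) + 1) ≠ 0 := by positivity
  have hf : ((m.factorial :ℚ)) ≠ 0 := by positivity
  push_cast
  field_simp

lemma expLog : psComp (exp ℚ) logOneAdd = 1 + X := by
  set f := psComp (exp ℚ) logOneAdd with hf
  have c0 : coeff 0 f = 1 := by
    rw [coeff_expLog (le_refl 0)]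
    simp [gN]
  have hrec : ∀ n : ℕ, ((n : ℚ) + 1) * coeff (n+1) f = (1 - n) * coeff n f := by
    intro n
    have h := congrArg (coeff n) (deriv_gN (n+1))
    rw [add_mul, one_mul, map_add, coeff_derivative,
      ← coeff_expLog (show n + 1 ≤ n + 1 + 1 by omega),
      ← coeff_expLog (show n ≤ n + 1 by omega)] at h
    cases n with
    | zero =>
      rw [coeff_zero_X_mul] at h
      push_cast at h ⊢
      linarith
    | succ k =>
      rw [coeff_succ_X_mul, coeff_derivative,
        ← coeff_expLog (show k + 1 ≤ k + 1 + 1 + 1 by omega)] at h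
      push_cast at h ⊢
      linarith
  have hv : ∀ n : ℕ, coeff n f = if n = 0 then 1 else if n = 1 then 1 else 0 := by
    intro n
    induction n with
    | zero => simpa using c0
    | succ k ih =>
      have h := hrec k
      rw [ih] at h
      have hk : ((k:ℚ)+1) ≠ 0 := by positivity
      by_cases h0 : k = 0
      · subst h0
        norm_num at h ⊢
        linarith
      · have hc : coeff (k+1) f = 0 := by
          by_cases h1 : k = 1
          · subst h1
            norm_num at h ⊢
            linarith
          · simp only [if_neg h0, if_neg h1] at h
            rw [mul_zero] at h
            exact (mul_eq_zero.mp h).resolve_left hk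
        rw [hc, if_neg (by omega), if_neg (by omega)]
  ext n
  rw [hv n, map_add, coeff_one, coeff_X]
  by_cases h0 : n = 0
  · subst h0; norm_num
  · by_cases h1 : n = 1
    · subst h1; norm_num
    · simp [h0, h1]

lemma psComp_expMul (x : ℚ) : psComp (expMul x) logOneAdd = onePlusPow x := by
  ext n
  rw [coeff_psComp, onePlusPow, coeff_psComp]
  refine Finset.sum_congr rfl fun m _ => ?_
  rw [smul_pow, map_smul, smul_eq_mul, coeff_exp]
  simp only [expMul, coeff_mk]
  have : algebraMap ℚ ℚ (1 / m.factorial) = 1 / m.factorial := by simp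
  rw [this]
  ring

noncomputable def compLog : PowerSeries ℚ →+* PowerSeries ℚ where
  toFun f := psComp f logOneAdd
  map_one' := psComp_one _
  map_mul' := psComp_mul _root_.constantCoeff_log
  map_zero' := psComp_zero _
  map_add' f g := psComp_add f g _


theorem DC_eq_BE_stirling_sum
    (r s : ℕ) (hr : 1 ≤ r) (hs : 1 ≤ s) (n : ℕ) (x : ℚ)
    (DC BE : ℕ → ℚ) (S1 : ℕ → ℕ → ℚ)
    (hDC : logOneAdd ^ r * (2 : PowerSeries ℚ) ^ s * onePlusPow x =
      PowerSeries.X ^ r * (PowerSeries.X + 2) ^ s * (PowerSeries.mk fun k => DC k / (k.factorial : ℚ)))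
    (hBE : (2 : PowerSeries ℚ) ^ s * PowerSeries.X ^ r * expMul x =
      (PowerSeries.exp ℚ + 1) ^ s * (PowerSeries.exp ℚ - 1) ^ r * (PowerSeries.mk fun k => BE k / (k.factorial : ℚ)))
    (hS1 : ∀ m, logOneAdd ^ m =
      (m.factorial : ℚ) • (PowerSeries.mk fun k => S1 k m / (k.factorial : ℚ))) :
    DC n = ∑ m ∈ Finset.range (n + 1), BE m * S1 n m := by
  have h2 := congrArg compLog hBE
  simp only [map_mul, map_pow, map_add, map_sub, map_one, map_ofNat] at h2
  have hX : compLog X = logOneAdd := psComp_X _root_.constantCoeff_log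
  have hE : compLog (exp ℚ) = 1 + X := expLog
  have hM : compLog (expMul x) = onePlusPow x := psComp_expMul x
  rw [hX, hE, hM, show ((1 + X + 1 : ℚ⟦X⟧)) = X + 2 by ring,
    show ((1 + X - 1 : ℚ⟦X⟧)) = X by ring] at h2
  have hne : (X : ℚ⟦X⟧) ^ r * (X + 2) ^ s ≠ 0 := by
    refine mul_ne_zero (pow_ne_zero _ X_ne_zero) (pow_ne_zero _ ?_)
    intro h
    have := congrArg (constantCoeff) h
    rw [map_add, map_ofNat] at this
    simp at this
  have h3 : (X : ℚ⟦X⟧) ^ r * (X + 2) ^ s * (PowerSeries.mk fun k => DC k / (k.factorial : ℚ))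
      = X ^ r * (X + 2) ^ s * compLog (PowerSeries.mk fun k => BE k / (k.factorial : ℚ)) := by
    rw [← hDC, show logOneAdd ^ r * (2 : ℚ⟦X⟧) ^ s * onePlusPow x
      = (2 : ℚ⟦X⟧) ^ s * logOneAdd ^ r * onePlusPow x by ring, h2]
    ring
  have hmain := mul_left_cancel₀ hne h3
  have h4 := congrArg (coeff n) hmain
  have hco : ∀ m, coeff n (logOneAdd ^ m) = (m.factorial : ℚ) * (S1 n m / (n.factorial : ℚ)) := by
    intro m
    rw [hS1 m, map_smul, smul_eq_mul, coeff_mk]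
  rw [coeff_mk] at h4
  have h5 : coeff n (compLog (PowerSeries.mk fun k => BE k / (k.factorial : ℚ)))
      = ∑ m ∈ Finset.range (n + 1),
        (BE m / (m.factorial : ℚ)) * ((m.factorial : ℚ) * (S1 n m / (n.factorial : ℚ))) := by
    show coeff n (psComp _ logOneAdd) = _
    rw [coeff_psComp]
    exact Finset.sum_congr rfl fun m _ => by rw [coeff_mk, hco m]
  rw [h5] at h4
  have hnf : ((n.factorial : ℚ)) ≠ 0 := by positivity
  calc DC n = (n.factorial : ℚ) * (DC n / (n.factorial : ℚ)) := by field_simp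
    _ = (n.factorial : ℚ) * ∑ m ∈ Finset.range (n + 1),
        (BE m / (m.factorial : ℚ)) * ((m.factorial : ℚ) * (S1 n m / (n.factorial : ℚ))) := by
        rw [← h4]
    _ = ∑ m ∈ Finset.range (n + 1), BE m * S1 n m := by
        rw [Finset.mul_sum]
        refine Finset.sum_congr rfl fun m _ => ?_
        have hmf : ((m.factorial : ℚ)) ≠ 0 := by positivity
        field_simp
end
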